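/- arXiv:2006.09929 — 3 statements merged into one kernel-verified Lean document; each statement's English description precedes it below -/
import Mathlib

section
/- Let G be a connected graph, λ > 1 a real number, A a finite connected subgraph (animal) of G with vertex set V(A), and B ⊆ V(A) a set such that the graph distance ρ(x,y) ≥ λ for every pair of distinct x, y ∈ B. Then |B| ≤ max{1, (2|V(A)| − 1)/λ}. -/
open SimpleGraph Finset

private lemma walk_dist_getVert_le {V : Type*} {G : SimpleGraph V} (hG : G.Connected) :
    ∀ {u v : V} (p : G.Walk u v) (i : ℕ), G.dist u (p.getVert i) ≤ i := by
  intro u v p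
  induction p with
  | nil =>
    intro i
    rw [Walk.getVert_of_length_le _ (Nat.zero_le i), SimpleGraph.dist_self]
    exact Nat.zero_le i
  | @cons u w v h q ih =>
    intro i
    cases i with
    | zero => simp
    | succ n =>
      rw [Walk.getVert_cons_succ]
      calc G.dist u (q.getVert n) ≤ G.dist u w + G.dist w (q.getVert n) := hG.dist_triangle
        _ ≤ 1 + n := by
            have h1 : G.dist u w ≤ 1 := by
              have := SimpleGraph.dist_le (Walk.cons h (Walk.nil : G.Walk w w))
              simpa using this
            exact Nat.add_le_add h1 (ih n)
        _ = n + 1 := Nat.add_comm 1 n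

private lemma walk_length_drop {V : Type*} {G : SimpleGraph V} :
    ∀ {u v : V} (p : G.Walk u v) (n : ℕ), (p.drop n).length = p.length - n := by
  intro u v p
  induction p with
  | nil => intro n; cases n <;> simp [Walk.drop]
  | cons h q ih =>
    intro n
    cases n with
    | zero => simp [Walk.drop]
    | succ m => simpa [Walk.drop] using ih m

private lemma ball_card_ge {V : Type*} {G : SimpleGraph V} [Fintype V] [DecidableEq V]
    (hG : G.Connected) (b u : V) (r : ℕ) (hr : r < G.dist b u) :
    r + 1 ≤ (Finset.univ.filter (fun v => G.dist b v ≤ r)).card := by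
  classical
  obtain ⟨p, hlen⟩ := hG.exists_walk_length_eq_dist b u
  have hrlen : r < p.length := by omega
  -- key : if getVert i = getVert j with i ≤ j ≤ r then j ≤ i
  have key : ∀ i j : ℕ, i ≤ j → j ≤ r → p.getVert i = p.getVert j → j ≤ i := by
    intro i j hij hjr heq
    have h1 : G.dist b (p.getVert j) ≤ i := heq ▸ walk_dist_getVert_le hG p i
    have h2 : G.dist (p.getVert j) u ≤ p.length - j := by
      have := SimpleGraph.dist_le (p.drop j)
      rwa [walk_length_drop] at this
    have h3 : G.dist b u ≤ i + (p.length - j) :=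
      le_trans hG.dist_triangle (Nat.add_le_add h1 h2)
    omega
  have hinj : Set.InjOn (fun i => p.getVert i) (Finset.range (r + 1) : Finset ℕ) := by
    intro i hi j hj heq
    simp only [Finset.coe_range, Set.mem_Iio] at hi hj
    rcases le_total i j with hle | hle
    · exact le_antisymm hle (key i j hle (by omega) heq)
    · exact (le_antisymm hle (key j i hle (by omega) heq.symm)).symm
  have hmaps : ∀ i ∈ Finset.range (r + 1),
      p.getVert i ∈ Finset.univ.filter (fun v => G.dist b v ≤ r) := by
    intro i hi
    rw [Finset.mem_range] at hi
    simp only [Finset.mem_filter, Finset.mem_univ, true_and]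
    exact le_trans (walk_dist_getVert_le hG p i) (by omega)
  have := Finset.card_le_card_of_injOn (fun i => p.getVert i) hmaps hinj
  simpa using this

/-- packing bound for λ-separated sets in an animal. -/
theorem stmt_0 {V : Type*} (G : SimpleGraph V) (hG : G.Connected)
    (lam : ℝ) (hlam : 1 < lam)
    (A : G.Subgraph) (hAconn : A.Connected) (hAfin : A.verts.Finite)
    (B : Set V) (hB : B ⊆ A.verts)
    (hsep : ∀ x ∈ B, ∀ y ∈ B, x ≠ y → lam ≤ (G.dist x y : ℝ)) :
    (B.ncard : ℝ) ≤ max 1 ((2 * (A.verts.ncard : ℝ) - 1) / lam) := by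
  classical
  rcases le_or_gt B.ncard 1 with hk1 | hk2
  · exact le_max_of_le_left (by exact_mod_cast hk1)
  haveI : Fintype A.verts := hAfin.fintype
  set H := A.coe with hH
  have hHconn : H.Connected := hAconn.coe
  set d : ℕ := ⌈lam⌉₊ with hd
  have hd2 : 2 ≤ d := by
    have : (1 : ℕ) < ⌈lam⌉₊ := Nat.lt_ceil.mpr (by exact_mod_cast hlam)
    omega
  set r : ℕ := (d - 1) / 2 with hr
  set r1 : ℕ := d - 1 - r with hr1
  have hrfacts : 2 * r ≤ d - 1 ∧ r + r1 = d - 1 ∧ d ≤ 2 * (r + 1) ∧ r1 ≤ d - 1 := by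
    constructor
    · omega
    · constructor
      · omega
      · omega
  -- the separated set inside the subgraph
  set B' : Finset A.verts := Finset.univ.filter (fun v => (v : V) ∈ B) with hB'
  have hBfin : B.Finite := hAfin.subset hB
  have hcardB' : B'.card = B.ncard := by
    have himg : B'.image (Subtype.val) = hBfin.toFinset := by
      ext x
      simp only [hB', Finset.mem_image, Finset.mem_filter, Finset.mem_univ, true_and,
        Set.Finite.mem_toFinset]
      constructor
      · rintro ⟨v, hv, rfl⟩; exact hv
      · intro hx; exact ⟨⟨x, hB hx⟩, hx, rfl⟩
    have := Finset.card_image_of_injective B' (Subtype.val_injective)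
    rw [himg] at this
    rw [← this, Set.ncard_eq_toFinset_card B hBfin]
  -- distance bound within H
  have hkey : ∀ x y : A.verts, (x : V) ∈ B → (y : V) ∈ B → x ≠ y → d ≤ H.dist x y := by
    intro x y hx hy hne
    have hneV : (x : V) ≠ (y : V) := fun h => hne (Subtype.val_injective h)
    have h1 : lam ≤ (G.dist x y : ℝ) := hsep x hx y hy hneV
    have h2 : d ≤ G.dist (x : V) (y : V) := Nat.ceil_le.mpr h1
    have h3 : G.dist (x : V) (y : V) ≤ H.dist x y := by
      obtain ⟨p, hp⟩ := hHconn.exists_walk_length_eq_dist x y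
      have := SimpleGraph.dist_le (p.map A.hom)
      rwa [Walk.length_map, hp] at this
    omega
  have hB'card2 : 2 ≤ B'.card := by omega
  obtain ⟨b0, hb0⟩ : B'.Nonempty := Finset.card_pos.mp (by omega)
  set rad : A.verts → ℕ := fun b => if b = b0 then r1 else r with hrad
  set ball : A.verts → Finset A.verts :=
    fun b => Finset.univ.filter (fun v => H.dist b v ≤ rad b) with hball
  -- balls are pairwise disjoint
  have hdisj : (B' : Set A.verts).PairwiseDisjoint ball := by
    intro b hb b' hb' hne
    simp only [Finset.mem_coe, hB', Finset.mem_filter, Finset.mem_univ, true_and] at hb hb'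
    simp only [Function.onFun]
    rw [Finset.disjoint_left]
    intro v hv hv'
    simp only [hball, Finset.mem_filter, Finset.mem_univ, true_and] at hv hv'
    have hsum : rad b + rad b' ≤ d - 1 := by
      simp only [hrad]
      split_ifs with h1 h2
      · exact absurd (h1.trans h2.symm) hne
      · omega
      · omega
      · omega
    have hv'' : H.dist v b' ≤ rad b' := by rw [SimpleGraph.dist_comm]; exact hv'
    have htri : H.dist b b' ≤ rad b + rad b' := by
      calc H.dist b b' ≤ H.dist b v + H.dist v b' := hHconn.dist_triangle
        _ ≤ rad b + rad b' := Nat.add_le_add hv hv''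
    have := hkey b b' hb hb' hne
    omega
  -- each ball is big
  have hbig : ∀ b ∈ B', rad b + 1 ≤ (ball b).card := by
    intro b hb
    obtain ⟨b', hb', hbne⟩ : ∃ b' ∈ B', b' ≠ b := by
      by_contra hcon
      push_neg at hcon
      have : B' ⊆ {b} := fun x hx => Finset.mem_singleton.mpr (hcon x hx)
      have := Finset.card_le_card this
      simp at this
      omega
    simp only [hB', Finset.mem_filter, Finset.mem_univ, true_and] at hb hb'
    have hdle : d ≤ H.dist b b' := hkey b b' hb hb' (Ne.symm hbne)
    have hradle : rad b ≤ d - 1 := by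
      simp only [hrad]; split_ifs <;> omega
    exact ball_card_ge hHconn b b' (rad b) (by omega)
  -- sum the ball sizes
  set n : ℕ := A.verts.ncard with hn
  have hncard : Fintype.card A.verts = n := by
    rw [hn, Set.ncard_eq_toFinset_card' A.verts, Set.toFinset_card]
  have hsumle : ∑ b ∈ B', (ball b).card ≤ n := by
    rw [← Finset.card_biUnion (fun x hx y hy hxy => hdisj hx hy hxy)]
    calc (B'.biUnion ball).card ≤ Finset.univ.card := Finset.card_le_univ _
      _ = n := by rw [Finset.card_univ, hncard]
  have hsumge : ∑ b ∈ B', (rad b + 1) ≤ ∑ b ∈ B', (ball b).card :=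
    Finset.sum_le_sum hbig
  have hsumeq : ∑ b ∈ B', (rad b + 1) = (B'.card - 1) * (r + 1) + (r1 + 1) := by
    rw [← Finset.sum_erase_add _ _ hb0]
    have h1 : ∑ b ∈ B'.erase b0, (rad b + 1) = (B'.card - 1) * (r + 1) := by
      rw [Finset.sum_congr rfl (fun x hx => ?_), Finset.sum_const, Finset.card_erase_of_mem hb0,
        smul_eq_mul]
      have : x ≠ b0 := (Finset.mem_erase.mp hx).1
      simp [hrad, this]
    rw [h1]
    simp [hrad]
  -- the main counting inequality : B'.card * d + 2 ≤ 2 * n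
  have hmain : B'.card * d + 2 ≤ 2 * n := by
    obtain ⟨m, hm⟩ : ∃ m, B'.card = m + 2 := ⟨B'.card - 2, by omega⟩
    have hsum : (m + 1) * (r + 1) + (r1 + 1) ≤ n := by
      have h := hsumge.trans hsumle
      rw [hsumeq, hm] at h
      simpa using h
    have hf1 : r + r1 + 1 = d := by omega
    have hmd : m * d ≤ m * (2 * (r + 1)) := Nat.mul_le_mul le_rfl (by omega)
    have h2n : m * (2 * (r + 1)) + 2 * (r + 1) + 2 * (r1 + 1) ≤ 2 * n := by
      calc m * (2 * (r + 1)) + 2 * (r + 1) + 2 * (r1 + 1)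
          = 2 * ((m + 1) * (r + 1) + (r1 + 1)) := by ring
        _ ≤ 2 * n := by omega
    calc B'.card * d + 2 = m * d + 2 * d + 2 := by rw [hm]; ring
      _ ≤ 2 * n := by linarith
  -- transfer to the reals
  have hc : (B'.card : ℝ) * (d : ℝ) + 2 ≤ 2 * (n : ℝ) := by exact_mod_cast hmain
  have hld : lam ≤ (d : ℝ) := Nat.le_ceil lam
  have hlam0 : (0 : ℝ) < lam := lt_trans one_pos hlam
  have h1 : (B.ncard : ℝ) * lam ≤ (B'.card : ℝ) * (d : ℝ) := by
    rw [hcardB']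
    exact mul_le_mul_of_nonneg_left hld (by positivity)
  have h2 : (B.ncard : ℝ) ≤ (2 * (A.verts.ncard : ℝ) - 1) / lam := by
    rw [le_div_iff₀ hlam0]
    have : (n : ℝ) = (A.verts.ncard : ℝ) := by rw [hn]
    nlinarith [h1, hc]
  exact le_max_of_le_right h2
end

section
/- Let g : [1,∞) → [0,∞) and ϕ : [1,∞) → [0,∞) be increasing-to-infinity functions, and suppose there exists a strictly increasing sequence {t_k} with t_k → +∞ such that ∑_{k=1}^∞ g(t_{k+1})/ϕ(t_k) < +∞. If G belongs to the class 𝔾₋(ϕ) of ϕ-repulsive graphs, then G is g-tempered. -/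
/-!
Choose `k₀` so that beyond `t k₀` the repulsion applies and `4 g (t (k+1)) ≤ φ (t k)`, hence
`4 g ≤ φ`. For a radius `r` let `K` be the first index with `φ (t K) > 2 r`. In a ball of
radius `r` at most one vertex has degree `≥ t K`, while the vertices of an animal `A` of degree
`≥ t k` (`k₀ ≤ k < K`) are `φ (t k)`-separated, so disjoint balls of radius about `φ (t k) / 2`
inside `A` leave room for at most `2 |A| / φ (t k)` of them. Summing over the scales,
`|A| G(A; g) ≤ |A| (g (t k₀) + 2 ∑ g (t (k+1)) / φ (t k)) + g (n v)` for the single top vertex `v`,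
which costs at most `|A|` on radii `r` where every high-degree vertex of the ball has
`g (n v) ≤ r + 1`; such radii are unbounded because `4 g ≤ φ`.
-/

open Filter

/-- Vertex degree (cardinality of the neighbour set). -/
noncomputable def deg {V : Type*} (G : SimpleGraph V) (x : V) : ℕ :=
  (G.neighborSet x).ncard

/-- `G(A;g)`: average of `g` of the degrees over the vertex set of a subgraph. -/
noncomputable def degAvg {V : Type*} (G : SimpleGraph V) (g : ℝ → ℝ)
    (A : G.Subgraph) : ℝ :=
  (∑ᶠ x ∈ A.verts, g (deg G x)) / (A.verts.ncard : ℝ)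

/-- An animal: a finite connected subgraph. -/
def IsAnimal {V : Type*} (G : SimpleGraph V) (A : G.Subgraph) : Prop :=
  A.Connected ∧ A.verts.Finite

/-- The ball `V_r(x)` of radius `r` around `x` in the graph distance. -/
def gball {V : Type*} (G : SimpleGraph V) (x : V) (r : ℕ) : Set V :=
  {y | G.dist x y ≤ r}

/-- `G` is `g`-tempered: there is `γ < ∞` such that for every vertex `x` there is a
strictly increasing sequence `{N_k} ⊆ ℕ` with `G(A;g) ≤ γ` for every animal `A`
contained in the ball of radius `N_k` around `x` having at least `N_k + 1` vertices. -/
def Tempered {V : Type*} (G : SimpleGraph V) (g : ℝ → ℝ) : Prop :=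
  ∃ γ : ℝ, ∀ x : V, ∃ N : ℕ → ℕ, StrictMono N ∧
    ∀ k : ℕ, ∀ A : G.Subgraph, IsAnimal G A → A.verts ⊆ gball G x (N k) →
      N k + 1 ≤ A.verts.ncard → degAvg G g A ≤ γ

/-- `G ∈ 𝔾₋(ϕ)`: there is `n*` such that `ρ(x,y) ≥ ϕ(m₋(x,y))` whenever
`m₋(x,y) = min{n(x),n(y)} ≥ n*`. -/
def Repulsive {V : Type*} (G : SimpleGraph V) (φ : ℝ → ℝ) : Prop :=
  ∃ nstar : ℕ, ∀ x y : V, x ≠ y →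
    (nstar : ℕ) ≤ min (deg G x) (deg G y) →
      φ (min (deg G x) (deg G y) : ℕ) ≤ (G.dist x y : ℝ)

open Finset

namespace SimpleGraph

variable {W : Type*} {H : SimpleGraph W}

lemma Connected.min_le_card_filter_dist_le [Fintype W] (hH : H.Connected) (v : W) (R : ℕ) :
    min (R + 1) (Fintype.card W) ≤ #{w | H.dist v w ≤ R} := by
  classical
  by_cases hfar : ∃ w, R ≤ H.dist v w
  · obtain ⟨w, hw⟩ := hfar
    obtain ⟨p, hp, hlen⟩ := hH.exists_path_of_dist v w
    have hinj : Set.InjOn p.getVert (range (R + 1)) :=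
      hp.getVert_injOn.mono fun i hi => show i ≤ p.length by
        rw [coe_range, Set.mem_Iio] at hi; omega
    calc min (R + 1) (Fintype.card W) ≤ #((range (R + 1)).image p.getVert) := by
          rw [card_image_of_injOn hinj, card_range]; exact min_le_left _ _
      _ ≤ #{w | H.dist v w ≤ R} := by
          refine card_le_card fun u hu => ?_
          obtain ⟨i, hi, rfl⟩ := mem_image.1 hu
          have := dist_le (p.take i)
          simp only [Walk.take_length, mem_range] at hi this
          simp only [mem_filter, mem_univ, true_and]
          omega
  · simp only [not_exists, not_le] at hfar
    rw [filter_true_of_mem fun w _ => (hfar w).le, card_univ]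
    exact min_le_right _ _

lemma Connected.card_mul_le_of_pairwise_lt_dist [Fintype W] (hH : H.Connected) (C : Finset W)
    (R : ℕ) (hC : (C : Set W).Pairwise fun u w => 2 * R < H.dist u w) :
    #C * min (R + 1) (Fintype.card W) ≤ Fintype.card W := by
  classical
  have hdisj : (C : Set W).PairwiseDisjoint fun u => ({w | H.dist u w ≤ R} : Finset W) := by
    intro u hu w hw huw
    rw [Function.onFun, Finset.disjoint_left]
    intro z hzu hzw
    simp only [mem_filter, mem_univ, true_and] at hzu hzw
    have := hH.dist_triangle (u := u) (v := z) (w := w)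
    rw [dist_comm (u := z)] at this
    have := hC hu hw huw
    omega
  calc #C * min (R + 1) (Fintype.card W) = ∑ u ∈ C, min (R + 1) (Fintype.card W) := by
        rw [sum_const, smul_eq_mul]
    _ ≤ ∑ u ∈ C, #{w | H.dist u w ≤ R} :=
        sum_le_sum fun u _ => hH.min_le_card_filter_dist_le u R
    _ = #(C.biUnion fun u => ({w | H.dist u w ≤ R} : Finset W)) := (card_biUnion hdisj).symm
    _ ≤ Fintype.card W := card_le_univ _

lemma Subgraph.dist_le_dist_coe {V : Type*} {G : SimpleGraph V} {A : G.Subgraph}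
    (hA : A.Connected) (u w : A.verts) : G.dist u w ≤ A.coe.dist u w := by
  obtain ⟨p, hp⟩ := hA.coe.exists_walk_length_eq_dist u w
  have := dist_le (p.map A.hom)
  rwa [Walk.length_map, hp] at this

end SimpleGraph

section Sequences

variable {α : Type*} [LinearOrder α]

lemma exists_mem_Ico_of_mem_Ico (t : ℕ → α) {a b : ℕ} (hab : a ≤ b) {y : α}
    (hy : y ∈ Set.Ico (t a) (t b)) : ∃ k ∈ Ico a b, y ∈ Set.Ico (t k) (t (k + 1)) := by
  induction b, hab using Nat.le_induction with
  | base => exact absurd hy.2 (not_lt.2 hy.1)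
  | succ b hab ih =>
    by_cases hyb : y < t b
    · obtain ⟨k, hk, hyk⟩ := ih ⟨hy.1, hyb⟩
      exact ⟨k, by simp only [mem_Ico] at hk ⊢; omega, hyk⟩
    · exact ⟨b, by simp only [mem_Ico]; omega, not_lt.1 hyb, hy.2⟩

lemma le_add_add_sum_ite {g : α → ℝ} (hg : Monotone g) (hg0 : ∀ y, 0 ≤ g y) (t : ℕ → α)
    {k₀ K : ℕ} (hK : k₀ ≤ K) (y : α) :
    g y ≤ g (t k₀) + (if t K ≤ y then g y else 0) +
      ∑ k ∈ Ico k₀ K, if t k ≤ y then g (t (k + 1)) else 0 := by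
  have hnonneg : ∀ k, 0 ≤ if t k ≤ y then g (t (k + 1)) else 0 := fun k => by
    split_ifs <;> simp [hg0]
  have hterms := sum_nonneg fun k (_ : k ∈ Ico k₀ K) => hnonneg k
  by_cases hlow : y < t k₀
  · have := hg hlow.le
    split_ifs <;> linarith [hg0 y]
  by_cases htop : t K ≤ y
  · rw [if_pos htop]
    linarith [hg0 (t k₀)]
  obtain ⟨k, hk, hyk⟩ :=
    exists_mem_Ico_of_mem_Ico t hK ⟨not_lt.1 hlow, not_le.1 htop⟩
  have hsingle := single_le_sum (fun j _ => hnonneg j) hk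
  rw [if_pos hyk.1] at hsingle
  rw [if_neg htop]
  linarith [hg hyk.2.le, hg0 (t k₀)]

variable [NoMaxOrder α]

lemma Filter.Tendsto.exists_lt_forall_Ico_le {u : ℕ → α} (hu : Tendsto u atTop atTop)
    (k₀ : ℕ) (c : α) : ∃ K, k₀ ≤ K ∧ c < u K ∧ ∀ k ∈ Ico k₀ K, u k ≤ c := by
  classical
  have hex : ∃ n, c < u (k₀ + n) := by
    obtain ⟨N, hN⟩ := eventually_atTop.1 (hu.eventually_gt_atTop c)
    exact ⟨N, hN _ (by omega)⟩
  refine ⟨k₀ + Nat.find hex, by omega, Nat.find_spec hex, fun k hk => ?_⟩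
  rw [mem_Ico] at hk
  have hmin := Nat.find_min hex (m := k - k₀) (by omega)
  rwa [Nat.add_sub_cancel' hk.1, not_lt] at hmin

lemma mul_le_of_forall_mul_le_succ {g φ : α → ℝ} {t : ℕ → α} (hg : Monotone g)
    (hφ : Monotone φ) (ht : Tendsto t atTop atTop) {c : ℝ} (hc : 0 ≤ c) {k₀ : ℕ}
    (h : ∀ k ≥ k₀, c * g (t (k + 1)) ≤ φ (t k)) {s : α} (hs : t k₀ ≤ s) : c * g s ≤ φ s := by
  obtain ⟨K, hK, hsK, -⟩ := ht.exists_lt_forall_Ico_le k₀ s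
  obtain ⟨k, hk, hsk⟩ := exists_mem_Ico_of_mem_Ico t hK ⟨hs, hsK⟩
  calc c * g s ≤ c * g (t (k + 1)) := mul_le_mul_of_nonneg_left (hg hsk.2.le) hc
    _ ≤ φ (t k) := h k (mem_Ico.1 hk).1
    _ ≤ φ s := hφ hsk.1

end Sequences

lemma Filter.Tendsto.eventually_pos_and_mul_le {a b : ℕ → ℝ}
    (hlim : Tendsto (fun k => a k / b k) atTop (nhds 0)) (hb : Tendsto b atTop atTop)
    {c : ℝ} (hc : 0 < c) : ∀ᶠ k in atTop, 0 < b k ∧ c * a k ≤ b k := by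
  filter_upwards [hlim.eventually (ge_mem_nhds (inv_pos.2 hc)), hb.eventually_gt_atTop 0]
    with k hk hbk
  refine ⟨hbk, ?_⟩
  rw [div_le_iff₀ hbk] at hk
  calc c * a k ≤ c * (c⁻¹ * b k) := mul_le_mul_of_nonneg_left hk hc.le
    _ = b k := by field_simp

section Graph

variable {V : Type*} {G : SimpleGraph V}

lemma dist_le_add_of_mem_gball (hG : G.Connected) {x u w : V} {r r' : ℕ}
    (hu : u ∈ gball G x r) (hw : w ∈ gball G x r') : G.dist u w ≤ r + r' := by
  have := hG.dist_triangle (u := u) (v := x) (w := w)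
  rw [SimpleGraph.dist_comm (u := u) (v := x)] at this
  simp only [gball, Set.mem_ofPred_eq] at hu hw
  omega

lemma IsAnimal.card_mul_le_of_le_dist {A : G.Subgraph} (hA : IsAnimal G A) {C : Finset V}
    (hCA : ↑C ⊆ A.verts) {d : ℝ} (hd : 0 < d) (hdA : d ≤ 2 * A.verts.ncard)
    (hC : (C : Set V).Pairwise fun u w => d ≤ G.dist u w) : #C * d ≤ 2 * A.verts.ncard := by
  classical
  have : Fintype A.verts := hA.2.fintype
  have hceil : 1 ≤ ⌈d / 2⌉₊ := Nat.one_le_iff_ne_zero.2 (Nat.ceil_pos.2 (by positivity)).ne'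
  -- the largest radius with `2 R < d`, so that balls of radius `R` around `C` are disjoint
  set R := ⌈d / 2⌉₊ - 1
  have hR : (R : ℝ) + 1 = ⌈d / 2⌉₊ := by simp [R, Nat.cast_sub hceil]
  have h2R : 2 * (R : ℝ) < d := by linarith [Nat.ceil_lt_add_one (half_pos hd).le]
  have hsep : (C.subtype (· ∈ A.verts) : Set A.verts).Pairwise
      fun u w => 2 * R < A.coe.dist u w := by
    intro u hu w hw huw
    have hdist := hC (mem_subtype.1 hu) (mem_subtype.1 hw) (Subtype.coe_injective.ne huw)
    have hcoe : (G.dist u w : ℝ) ≤ A.coe.dist u w := by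
      exact_mod_cast SimpleGraph.Subgraph.dist_le_dist_coe hA.1 u w
    exact_mod_cast h2R.trans_le (hdist.trans hcoe)
  have hpack := hA.1.coe.card_mul_le_of_pairwise_lt_dist _ R hsep
  rw [card_subtype, filter_true_of_mem fun v hv => hCA hv, Fintype.card_eq_nat_card,
    Nat.card_coe_set_eq] at hpack
  have hmin : d / 2 ≤ (min (R + 1) A.verts.ncard : ℕ) := by
    rw [Nat.cast_min, Nat.cast_add_one, hR]
    exact le_min (Nat.le_ceil _) (by linarith)
  calc #C * d = 2 * (#C * (d / 2)) := by ring
    _ ≤ 2 * (#C * (min (R + 1) A.verts.ncard : ℕ)) := by gcongr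
    _ ≤ 2 * A.verts.ncard := by exact_mod_cast Nat.mul_le_mul_left 2 hpack

def DegSeparated (G : SimpleGraph V) (φ : ℝ → ℝ) (s₀ : ℝ) : Prop :=
  ∀ s, s₀ ≤ s → ∀ u w, u ≠ w → s ≤ deg G u → s ≤ deg G w → φ s ≤ G.dist u w

lemma Repulsive.exists_degSeparated {φ : ℝ → ℝ} (h : Repulsive G φ) (hφ : Monotone φ) :
    ∃ s₀, DegSeparated G φ s₀ := by
  obtain ⟨n, hn⟩ := h
  refine ⟨n, fun s hs u w huw hu hw => ?_⟩
  have hmin : s ≤ (min (deg G u) (deg G w) : ℕ) := by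
    rw [Nat.cast_min]
    exact le_min hu hw
  exact (hφ hmin).trans (hn u w huw (by exact_mod_cast hs.trans hmin))

namespace DegSeparated

variable {φ : ℝ → ℝ} {s₀ : ℝ}

lemma pairwise_le_dist (h : DegSeparated G φ s₀) {s : ℝ} (hs : s₀ ≤ s) {C : Set V}
    (hC : ∀ v ∈ C, s ≤ deg G v) : C.Pairwise fun u w => φ s ≤ G.dist u w :=
  fun u hu w hw huw => h s hs u w huw (hC u hu) (hC w hw)

lemma card_filter_le_one (hG : G.Connected) (h : DegSeparated G φ s₀) {s : ℝ} (hs : s₀ ≤ s)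
    {x : V} {r : ℕ} (hr : 2 * r < φ s) {F : Finset V} (hF : ↑F ⊆ gball G x r) :
    #{v ∈ F | s ≤ deg G v} ≤ 1 := by
  refine card_le_one.2 fun u hu w hw => by_contra fun huw => ?_
  rw [mem_filter] at hu hw
  have hsep := h s hs u w huw hu.2 hw.2
  have hdist : (G.dist u w : ℝ) ≤ 2 * r := by
    exact_mod_cast (dist_le_add_of_mem_gball hG (hF hu.1) (hF hw.1)).trans_eq (two_mul r).symm
  linarith

/-- If the radius `M` is spoiled by a vertex `v` with `g (n v) > M + 1`, the radius
`⌈g (n v)⌉` cannot be spoiled as well: a second such vertex `w` would be too close to `v`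
for the separation `φ ≥ 4 g` at the smaller degree. -/
lemma frequently_forall_gball (hG : G.Connected) (h : DegSeparated G φ s₀) {g : ℝ → ℝ}
    (hg : Monotone g) (hgφ : ∀ s, s₀ ≤ s → 4 * g s ≤ φ s) (x : V) :
    ∃ᶠ r : ℕ in atTop, ∀ v ∈ gball G x r, s₀ ≤ deg G v → g (deg G v) ≤ r + 1 := by
  rw [frequently_atTop]
  intro M
  by_contra! hbad
  obtain ⟨v, hv, hv₀, hvM⟩ := hbad M le_rfl
  set r := ⌈g (deg G v)⌉₊
  have hvr : g (deg G v) ≤ r := Nat.le_ceil _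
  have hrv : (r : ℝ) < g (deg G v) + 1 :=
    Nat.ceil_lt_add_one (by linarith [M.cast_nonneg' (α := ℝ)])
  have hMr : M ≤ r := by exact_mod_cast (Nat.lt_ceil.2 (by linarith)).le
  obtain ⟨w, hw, hw₀, hwr⟩ := hbad r hMr
  have hvw : v ≠ w := by rintro rfl; linarith
  have hgmin : g (min (deg G v : ℝ) (deg G w)) = g (deg G v) := by
    rw [hg.map_min]
    exact min_eq_left (by linarith)
  have hsep := h _ (le_min hv₀ hw₀) v w hvw (min_le_left _ _) (min_le_right _ _)
  have hdist : (G.dist v w : ℝ) ≤ M + r := by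
    exact_mod_cast dist_le_add_of_mem_gball hG hv hw
  have hgφ' := hgφ _ (le_min hv₀ hw₀)
  have hMr' : (M : ℝ) ≤ r := by exact_mod_cast hMr
  rw [hgmin] at hgφ'
  linarith

lemma degAvg_le {g : ℝ → ℝ} {t : ℕ → ℝ} {k₀ K : ℕ} (hG : G.Connected)
    (h : DegSeparated G φ (t k₀)) (hg : Monotone g) (hg0 : ∀ y, 0 ≤ g y) (ht : Monotone t)
    (hK : k₀ ≤ K) {x : V} {r : ℕ}
    (hKr : 2 * r < φ (t K)) (hφr : ∀ k ∈ Ico k₀ K, 0 < φ (t k) ∧ φ (t k) ≤ 2 * r)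
    (hgood : ∀ v ∈ gball G x r, t k₀ ≤ deg G v → g (deg G v) ≤ r + 1)
    {A : G.Subgraph} (hA : IsAnimal G A) (hAx : A.verts ⊆ gball G x r)
    (hAr : r + 1 ≤ A.verts.ncard) :
    degAvg G g A ≤ g (t k₀) + 1 + 2 * ∑ k ∈ Ico k₀ K, g (t (k + 1)) / φ (t k) := by
  classical
  obtain ⟨F, hF⟩ := hA.2.exists_finset_coe
  have hm : A.verts.ncard = #F := by rw [← hF, Set.ncard_coe_finset]
  have hFx : ↑F ⊆ gball G x r := hF ▸ hAx
  have hmr : (r : ℝ) + 1 ≤ #F := by exact_mod_cast hm ▸ hAr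
  have htop : ∑ v ∈ F with t K ≤ deg G v, g (deg G v) ≤ #F :=
    calc ∑ v ∈ F with t K ≤ deg G v, g (deg G v)
        ≤ #{v ∈ F | t K ≤ deg G v} • ((r : ℝ) + 1) := sum_le_card_nsmul _ _ _ fun v hv =>
          hgood v (hFx (mem_filter.1 hv).1) ((ht hK).trans (mem_filter.1 hv).2)
      _ ≤ 1 • ((r : ℝ) + 1) :=
          nsmul_le_nsmul_left (by positivity) (h.card_filter_le_one hG (ht hK) hKr hFx)
      _ ≤ #F := by rwa [one_nsmul]
  have hband : ∀ k ∈ Ico k₀ K,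
      #{v ∈ F | t k ≤ deg G v} * g (t (k + 1)) ≤ 2 * #F * (g (t (k + 1)) / φ (t k)) := by
    intro k hk
    obtain ⟨hφk, hφkr⟩ := hφr k hk
    have hpack := hA.card_mul_le_of_le_dist (C := {v ∈ F | t k ≤ deg G v})
      (by rw [← hF]; exact coe_subset.2 (filter_subset _ _)) hφk (by rw [hm]; linarith)
      (h.pairwise_le_dist (ht (mem_Ico.1 hk).1) fun v hv => (mem_filter.1 hv).2)
    rw [hm] at hpack
    rw [mul_div_assoc', le_div_iff₀ hφk]
    nlinarith [hg0 (t (k + 1))]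
  rw [degAvg, ← hF, finsum_mem_coe_finset, Set.ncard_coe_finset,
    div_le_iff₀ (by linarith [r.cast_nonneg' (α := ℝ)])]
  calc ∑ v ∈ F, g (deg G v)
      ≤ ∑ v ∈ F, (g (t k₀) + (if t K ≤ deg G v then g (deg G v) else 0) +
          ∑ k ∈ Ico k₀ K, if t k ≤ deg G v then g (t (k + 1)) else 0) :=
        sum_le_sum fun v _ => le_add_add_sum_ite hg hg0 t hK _
    _ = #F * g (t k₀) + ∑ v ∈ F with t K ≤ deg G v, g (deg G v) +
          ∑ k ∈ Ico k₀ K, #{v ∈ F | t k ≤ deg G v} * g (t (k + 1)) := by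
        rw [sum_add_distrib, sum_add_distrib, sum_const, nsmul_eq_mul, sum_filter, sum_comm]
        simp only [← sum_filter, sum_const, nsmul_eq_mul]
    _ ≤ #F * g (t k₀) + #F + ∑ k ∈ Ico k₀ K, 2 * #F * (g (t (k + 1)) / φ (t k)) :=
        add_le_add (add_le_add le_rfl htop) (sum_le_sum hband)
    _ = (g (t k₀) + 1 + 2 * ∑ k ∈ Ico k₀ K, g (t (k + 1)) / φ (t k)) * #F := by
        rw [← mul_sum]
        ring

end DegSeparated

end Graph

theorem stmt_4_general {V : Type*} (G : SimpleGraph V) (hconn : G.Connected)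
    (g φ : ℝ → ℝ) (hg : Monotone g)
    (hphi : Monotone φ) (hphiTop : Tendsto φ atTop atTop)
    (hg0 : ∀ t, 0 ≤ g t) (hphi0 : ∀ t, 0 ≤ φ t)
    (t : ℕ → ℝ) (ht : StrictMono t) (htTop : Tendsto t atTop atTop)
    (hsum : Summable (fun k => g (t (k + 1)) / φ (t k)))
    (hrep : Repulsive G φ) :
    Tempered G g := by
  obtain ⟨s₀, hsep⟩ := hrep.exists_degSeparated hphi
  have hφt := hphiTop.comp htTop
  obtain ⟨k₀, hk₀⟩ := eventually_atTop.1 <| (htTop.eventually_ge_atTop s₀).and <|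
    hsum.tendsto_atTop_zero.eventually_pos_and_mul_le hφt four_pos
  have hsep₀ : DegSeparated G φ (t k₀) := fun s hs => hsep s ((hk₀ k₀ le_rfl).1.trans hs)
  have hgφ : ∀ s, t k₀ ≤ s → 4 * g s ≤ φ s := fun s =>
    mul_le_of_forall_mul_le_succ hg hphi htTop four_pos.le fun k hk => (hk₀ k hk).2.2
  refine ⟨g (t k₀) + 1 + 2 * ∑' k, g (t (k + 1)) / φ (t k), fun x => ?_⟩
  obtain ⟨N, hN, hgood⟩ :=
    extraction_of_frequently_atTop (hsep₀.frequently_forall_gball hconn hg hgφ x)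
  refine ⟨N, hN, fun k A hA hAx hAr => ?_⟩
  obtain ⟨K, hK, hKr, hφr⟩ := hφt.exists_lt_forall_Ico_le k₀ (2 * N k)
  refine (hsep₀.degAvg_le hconn hg hg0 ht.monotone hK hKr
    (fun j hj => ⟨(hk₀ j (mem_Ico.1 hj).1).2.1, hφr j hj⟩) (hgood k) hA hAx hAr).trans ?_
  gcongr
  exact hsum.sum_le_tsum _ fun j _ => div_nonneg (hg0 _) (hphi0 _)

/-- if `g, ϕ` increase to infinity and there is a strictly increasing
sequence `t_k → ∞` with `∑_k g(t_{k+1})/ϕ(t_k) < ∞`, then every `ϕ`-repulsive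
graph is `g`-tempered. -/
theorem stmt_4 {V : Type*} (G : SimpleGraph V) (hconn : G.Connected)
    (g φ : ℝ → ℝ) (hg : Monotone g) (hgTop : Tendsto g atTop atTop)
    (hphi : Monotone φ) (hphiTop : Tendsto φ atTop atTop)
    (hg0 : ∀ t, 0 ≤ g t) (hphi0 : ∀ t, 0 ≤ φ t)
    (t : ℕ → ℝ) (ht : StrictMono t) (htTop : Tendsto t atTop atTop)
    (hsum : Summable (fun k => g (t (k + 1)) / φ (t k)))
    (hrep : Repulsive G φ) :
    Tempered G g :=
  stmt_4_general G hconn g φ hg hphi hphiTop hg0 hphi0 t ht htTop hsum hrep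
end

section
/- The rooted tree in which the root has 2 children, each vertex at depth 1 has 3 children, each vertex at depth 2 has 4 children, and in general each vertex at depth d has d+2 children, is not g-tempered for any unbounded increasing function g : [1,∞) → [0,∞). -/
open Filter

/-- Vertices of the rooted tree: finite sequences `l` whose entry at depth `i`
chooses one of `i + 2` children (the root `[]` has 2 children, each of its
children has 3 children, and so on: each vertex at depth `d` has `d + 2` children). -/
def TreeV : Type := {l : List ℕ // ∀ i : Fin l.length, l.get i < (i : ℕ) + 2}

/-- The rooted tree graph: `a` and `b` are adjacent iff one is obtained from the
other by appending one more entry. -/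
def TreeG : SimpleGraph TreeV :=
  SimpleGraph.fromRel (fun a b => ∃ c : ℕ, b.val = a.val ++ [c])

/-!
Along the leftmost ray of the tree the degrees grow without bound, so `g` of the degrees tends
to infinity, and hence so do its Cesàro averages. The initial segment of the ray of length `N`
is an animal with `N + 1` vertices in the ball of radius `N` around the root, so its degree
average cannot stay bounded along any `N_k → ∞`.
-/

open Finset in
theorem Filter.Tendsto.cesaro_atTop {u : ℕ → ℝ} (h : Tendsto u atTop atTop) :
    Tendsto (fun n : ℕ => (n⁻¹ : ℝ) * ∑ i ∈ range n, u i) atTop atTop := by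
  refine tendsto_atTop.2 fun b => ?_
  -- Truncating `u` at `b + 1` gives a sequence converging to `b + 1`, with smaller averages.
  have htrunc : Tendsto (fun i => min (u i) (b + 1)) atTop (nhds (b + 1)) :=
    tendsto_const_nhds.congr' <|
      (tendsto_atTop.1 h (b + 1)).mono fun i hi => (min_eq_right hi).symm
  filter_upwards [htrunc.cesaro.eventually (eventually_ge_nhds (lt_add_one b))] with n hn
  exact hn.trans <| mul_le_mul_of_nonneg_left
    (sum_le_sum fun i _ => min_le_left _ _) (by positivity)

theorem SimpleGraph.Walk.isAnimal_toSubgraph {V : Type*} {G : SimpleGraph V} {u v : V}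
    (p : G.Walk u v) : IsAnimal G p.toSubgraph :=
  ⟨p.toSubgraph_connected, by simp⟩

namespace TreeV

theorem lt_of_val_eq_append (y : TreeV) {l : List ℕ} {c : ℕ} (h : y.val = l ++ [c]) :
    c < l.length + 2 := by
  have hlen : l.length < y.val.length := by simp [h]
  simpa [h] using y.property ⟨l.length, hlen⟩

def child (x : TreeV) (c : ℕ) (hc : c < x.val.length + 2) : TreeV :=
  ⟨x.val ++ [c], fun i => by
    simp only [List.get_eq_getElem, List.getElem_append]
    split_ifs with hi
    · exact x.property ⟨i, hi⟩
    · have : (i : ℕ) = x.val.length := by have := i.isLt; simp at this; omega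
      simpa [this] using hc⟩

theorem adj_child (x : TreeV) (c : ℕ) (hc : c < x.val.length + 2) :
    TreeG.Adj x (x.child c hc) := by
  refine (SimpleGraph.fromRel_adj _ _ _).2 ⟨fun h => ?_, Or.inl ⟨c, rfl⟩⟩
  simpa [child] using congrArg (fun t : TreeV => t.val.length) h

end TreeV

theorem finite_neighborSet_treeG (x : TreeV) : (TreeG.neighborSet x).Finite := by
  have hfin : ({x.val.dropLast} ∪ (x.val ++ [·]) '' Set.Iio (x.val.length + 2) :
      Set (List ℕ)).Finite :=
    (Set.finite_singleton _).union ((Set.finite_Iio _).image _)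
  refine (hfin.preimage Subtype.val_injective.injOn).subset
    fun (y : TreeV) (hy : TreeG.Adj x y) => ?_
  rw [TreeG, SimpleGraph.fromRel_adj] at hy
  obtain ⟨-, ⟨c, hc⟩ | ⟨c, hc⟩⟩ := hy
  · exact Or.inr ⟨c, y.lt_of_val_eq_append hc, hc.symm⟩
  · exact Or.inl (by simp [hc])

theorem length_add_two_le_deg_treeG (x : TreeV) : x.val.length + 2 ≤ deg TreeG x := by
  set children := fun c : Fin (x.val.length + 2) => x.child c c.isLt
  have hinj : Function.Injective children := fun a b h => by
    simpa [children, TreeV.child, Fin.ext_iff] using congrArg (fun t : TreeV => t.val.getLast?) h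
  calc x.val.length + 2 = (Set.range children).ncard := by
        rw [Set.ncard_range_of_injective hinj, Nat.card_eq_fintype_card, Fintype.card_fin]
    _ ≤ deg TreeG x := Set.ncard_le_ncard
        (Set.range_subset_iff.2 fun c => x.adj_child c c.isLt) (finite_neighborSet_treeG x)

def ray (j : ℕ) : TreeV :=
  ⟨List.replicate j 0, fun i => by simp⟩

@[simp]
theorem ray_length (j : ℕ) : (ray j).val.length = j := List.length_replicate

theorem ray_injective : Function.Injective ray := fun a b h => by
  simpa using congrArg (fun t : TreeV => t.val.length) h

theorem treeG_adj_ray_succ (j : ℕ) : TreeG.Adj (ray j) (ray (j + 1)) :=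
  (SimpleGraph.fromRel_adj _ _ _).2
    ⟨fun h => by simpa using ray_injective h, Or.inl ⟨0, by simp [ray, List.replicate_succ']⟩⟩

theorem tendsto_deg_treeG_ray : Tendsto (fun j => (deg TreeG (ray j) : ℝ)) atTop atTop := by
  refine tendsto_natCast_atTop_atTop.comp (tendsto_atTop_mono (fun j => ?_) tendsto_id)
  have := length_add_two_le_deg_treeG (ray j)
  rw [ray_length] at this
  exact (Nat.le_add_right j 2).trans this

def rayWalk : (n : ℕ) → TreeG.Walk (ray 0) (ray n)
  | 0 => .nil
  | n + 1 => (rayWalk n).concat (treeG_adj_ray_succ n)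

theorem rayWalk_length (n : ℕ) : (rayWalk n).length = n := by
  induction n with
  | zero => rfl
  | succ n ih => rw [rayWalk, SimpleGraph.Walk.length_concat, ih]

theorem support_rayWalk (n : ℕ) : (rayWalk n).support = (List.range (n + 1)).map ray := by
  induction n with
  | zero => rfl
  | succ n ih =>
    rw [rayWalk, SimpleGraph.Walk.support_concat, ih, List.range_succ (n := n + 1),
      List.map_append, List.map_singleton]

theorem verts_toSubgraph_rayWalk (n : ℕ) :
    (rayWalk n).toSubgraph.verts = ray '' Set.Iio (n + 1) := by
  ext v
  simp [support_rayWalk, eq_comm]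

theorem ncard_verts_toSubgraph_rayWalk (n : ℕ) :
    (rayWalk n).toSubgraph.verts.ncard = n + 1 := by
  rw [verts_toSubgraph_rayWalk, Set.ncard_image_of_injective _ ray_injective, ← Finset.coe_range,
    Set.ncard_coe_finset, Finset.card_range]

theorem verts_toSubgraph_rayWalk_subset_gball (n : ℕ) :
    (rayWalk n).toSubgraph.verts ⊆ gball TreeG (ray 0) n := by
  rw [verts_toSubgraph_rayWalk]
  rintro _ ⟨j, hj, rfl⟩
  exact (SimpleGraph.dist_le (rayWalk j)).trans
    (by simpa [rayWalk_length] using Nat.lt_succ_iff.1 hj)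

theorem degAvg_rayWalk (g : ℝ → ℝ) (n : ℕ) :
    degAvg TreeG g (rayWalk n).toSubgraph =
      ((n + 1 : ℕ)⁻¹ : ℝ) * ∑ j ∈ Finset.range (n + 1), g (deg TreeG (ray j)) := by
  rw [degAvg, ncard_verts_toSubgraph_rayWalk, verts_toSubgraph_rayWalk,
    finsum_mem_image ray_injective.injOn, ← Finset.coe_range, finsum_mem_coe_finset,
    div_eq_inv_mul]

theorem tendsto_degAvg_rayWalk {g : ℝ → ℝ} (hg : Tendsto g atTop atTop) :
    Tendsto (fun n => degAvg TreeG g (rayWalk n).toSubgraph) atTop atTop := by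
  simp_rw [degAvg_rayWalk]
  exact ((hg.comp tendsto_deg_treeG_ray).cesaro_atTop).comp (tendsto_add_atTop_nat 1)

theorem stmt_8_general (g : ℝ → ℝ)
    (hgTop : Filter.Tendsto g Filter.atTop Filter.atTop) :
    ¬ Tempered TreeG g := by
  rintro ⟨γ, hγ⟩
  obtain ⟨N, hN, hbound⟩ := hγ (ray 0)
  obtain ⟨k, hk⟩ :=
    (((tendsto_degAvg_rayWalk hgTop).comp hN.tendsto_atTop).eventually_gt_atTop γ).exists
  exact hk.not_ge <| hbound k _ (rayWalk _).isAnimal_toSubgraph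
    (verts_toSubgraph_rayWalk_subset_gball _) (ncard_verts_toSubgraph_rayWalk _).ge

/-- the rooted tree in which every vertex at depth `d` has `d + 2`
children is not `g`-tempered for any unbounded increasing `g`. -/
theorem stmt_8 (g : ℝ → ℝ) (hg : Monotone g)
    (hgTop : Filter.Tendsto g Filter.atTop Filter.atTop) :
    ¬ Tempered TreeG g :=
  stmt_8_general g hgTop
end
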